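/- arXiv:2508.21602 — 4 statements merged into one kernel-verified Lean document; each statement's English description precedes it below -/
import Mathlib

section
/- Let π be a permutation of ({0,1}ⁿ)ʷ that is an (α, ε₁, ε₂)-Multi-Source-Somewhere-Condenser, and let q = 2^{αn} be a power of two. Then for all discrete q-boxes U, V of dimension w one has |{x ∈ U : π(x) ∈ V}| ≤ q^{w−ε₁} + ε₂·q^w; equivalently, the conductance degree satisfies condd_α(π) ≤ log_q(q^{w−ε₁} + ε₂ q^w). -/
/-!
Run the condenser on the uniform sources on `U₁, …, U_w`: their min-entropy is exactly
`log q = αn`, and `π(X)` lands in `V` with probability `|{x ∈ U : π x ∈ V}| / q^w`.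
In the decomposition `∑ γᵢ Cᵢ + γ R`, the `i`-th marginal of `Cᵢ` gives each point mass at most
`2^{-(1+ε₁)αn}`, so `Cᵢ` puts mass at most `|Vᵢ| · 2^{-(1+ε₁)αn} = q^{-ε₁}` on `V`, while `γ R`
contributes at most `γ ≤ ε₂`.
-/

open Finset

namespace Stmt0

/-- Bit strings of length `n`, i.e. `{0,1}ⁿ`. -/
abbrev Str (n : ℕ) := Fin n → Bool

/-- The space `({0,1}ⁿ)ʷ`. -/
abbrev Space (n w : ℕ) := Fin w → Str n

/-- A family `Us` of subsets of `{0,1}ⁿ` describes a discrete `q`-box of dimension `w`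
(the box itself being the product set `Fintype.piFinset Us`). -/
def IsBox (n w q : ℕ) (Us : Fin w → Finset (Str n)) : Prop :=
  ∀ i, (Us i).card = q

/-- `|{x ∈ U : π(x) ∈ V}|` for the boxes `U = U₁ × ⋯ × U_w` and `V = V₁ × ⋯ × V_w`. -/
def boxCount {n w : ℕ} (π : Space n w → Space n w)
    (Us Vs : Fin w → Finset (Str n)) : ℕ :=
  ((Fintype.piFinset Us).filter (fun x => π x ∈ Fintype.piFinset Vs)).card

/-- `p` is a probability distribution on a finite type. -/
def IsDist {α : Type*} [Fintype α] (p : α → ℝ) : Prop :=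
  (∀ x, 0 ≤ p x) ∧ ∑ x, p x = 1

/-- The distribution of `π(X)` when `X` has distribution `p`. -/
def pushforward {n w : ℕ} (π : Space n w → Space n w) (p : Space n w → ℝ) :
    Space n w → ℝ :=
  fun y => ∑ x : Space n w, if π x = y then p x else 0

/-- `π` is an `(α, ε₁, ε₂)`-Multi-Source-Somewhere-Condenser: for all independent sources
`X₁, …, X_w` on `{0,1}ⁿ`, each of min-entropy at least `αn`, the distribution of
`π(X₁, …, X_w)` is a convex combination `∑ᵢ γᵢ Cᵢ + γ R` with `γ ≤ ε₂` and the `i`-th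
coordinate of `Cᵢ` having min-entropy at least `(1+ε₁)αn` (whenever `γᵢ > 0`). -/
def IsMSSC (n w : ℕ) (π : Space n w → Space n w) (α ε₁ ε₂ : ℝ) : Prop :=
  ∀ X : Fin w → (Str n → ℝ),
    (∀ i, IsDist (X i)) →
    (∀ i x, X i x ≤ (2 : ℝ) ^ (-(α * n))) →
    ∃ (γ : Fin w → ℝ) (γR : ℝ) (C : Fin w → (Space n w → ℝ)) (R : Space n w → ℝ),
      (∀ i, 0 ≤ γ i) ∧ 0 ≤ γR ∧ (∑ i, γ i) + γR = 1 ∧ γR ≤ ε₂ ∧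
      (∀ i, IsDist (C i)) ∧ IsDist R ∧
      (∀ y, pushforward π (fun x => ∏ i, X i (x i)) y
          = (∑ i, γ i * C i y) + γR * R y) ∧
      (∀ i, 0 < γ i → ∀ v : Str n,
        (∑ y : Space n w, if y i = v then C i y else 0) ≤ (2 : ℝ) ^ (-((1 + ε₁) * α * n)))

noncomputable def uniformOn {α : Type*} [DecidableEq α] (s : Finset α) : α → ℝ :=
  fun x => if x ∈ s then ((#s : ℕ) : ℝ)⁻¹ else 0

theorem isDist_uniformOn {α : Type*} [Fintype α] [DecidableEq α] {s : Finset α}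
    (hs : s.Nonempty) : IsDist (uniformOn s) := by
  refine ⟨fun x => by unfold uniformOn; split <;> positivity, ?_⟩
  simp only [uniformOn, Finset.sum_ite_mem, Finset.univ_inter, Finset.sum_const, nsmul_eq_mul]
  exact mul_inv_cancel₀ (Nat.cast_ne_zero.mpr hs.card_pos.ne')

theorem uniformOn_le {α : Type*} [DecidableEq α] (s : Finset α) (x : α) :
    uniformOn s x ≤ ((#s : ℕ) : ℝ)⁻¹ := by
  unfold uniformOn
  split <;> first | rfl | positivity

theorem IsDist.sum_le_one {α : Type*} [Fintype α] {p : α → ℝ} (hp : IsDist p)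
    (t : Finset α) : ∑ x ∈ t, p x ≤ 1 :=
  hp.2 ▸ Finset.sum_le_sum_of_subset_of_nonneg (Finset.subset_univ t) fun x _ _ => hp.1 x

theorem sum_le_of_eq_convex_combination {α ι : Type*} [Fintype α] [Fintype ι] {γ : ι → ℝ}
    {γR a : ℝ} {C : ι → α → ℝ} {R p : α → ℝ} (t : Finset α) (ha : 0 ≤ a)
    (hγ : ∀ i, 0 ≤ γ i) (hγR : 0 ≤ γR) (hsum : ∑ i, γ i + γR = 1) (hR : IsDist R)
    (hp : ∀ y, p y = ∑ i, γ i * C i y + γR * R y) (hC : ∀ i, 0 < γ i → ∑ y ∈ t, C i y ≤ a) :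
    ∑ y ∈ t, p y ≤ a + γR := by
  have hCi : ∀ i, γ i * ∑ y ∈ t, C i y ≤ γ i * a := fun i => by
    rcases (hγ i).lt_or_eq with hi | hi
    · exact mul_le_mul_of_nonneg_left (hC i hi) hi.le
    · simp [← hi]
  calc ∑ y ∈ t, p y = ∑ i, γ i * ∑ y ∈ t, C i y + γR * ∑ y ∈ t, R y := by
        simp only [hp, Finset.sum_add_distrib, Finset.mul_sum]
        rw [Finset.sum_comm]
    _ ≤ (∑ i, γ i) * a + γR * 1 := by
        rw [Finset.sum_mul]
        exact add_le_add (Finset.sum_le_sum fun i _ => hCi i)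
          (mul_le_mul_of_nonneg_left (hR.sum_le_one t) hγR)
    _ ≤ a + γR := by nlinarith [Finset.sum_nonneg fun i (_ : i ∈ Finset.univ) => hγ i]

theorem sum_piFinset_le_sum_marginal {ι β : Type*} [Fintype ι] [DecidableEq ι] [Fintype β]
    [DecidableEq β] {C : (ι → β) → ℝ} (hC : ∀ y, 0 ≤ C y) (Vs : ι → Finset β) (i : ι) :
    ∑ y ∈ Fintype.piFinset Vs, C y ≤ ∑ v ∈ Vs i, ∑ y, if y i = v then C y else 0 := by
  rw [Finset.sum_comm]
  simp only [Finset.sum_ite_eq, ← Finset.sum_filter]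
  refine Finset.sum_le_sum_of_subset_of_nonneg (fun y hy => ?_) fun y _ _ => hC y
  simpa using Fintype.mem_piFinset.mp hy i

theorem sum_pushforward {n w : ℕ} (π : Space n w → Space n w) (p : Space n w → ℝ)
    (t : Finset (Space n w)) :
    ∑ y ∈ t, pushforward π p y = ∑ x with π x ∈ t, p x := by
  simp only [pushforward]
  rw [Finset.sum_comm, Finset.sum_filter]
  simp only [Finset.sum_ite_eq]

theorem sum_pushforward_prod_uniformOn {n w q : ℕ} (π : Space n w → Space n w)
    {Us : Fin w → Finset (Str n)} (hU : IsBox n w q Us) (Vs : Fin w → Finset (Str n)) :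
    ∑ y ∈ Fintype.piFinset Vs, pushforward π (fun x => ∏ i, uniformOn (Us i) (x i)) y
      = boxCount π Us Vs / (q : ℝ) ^ w := by
  have hset : Finset.univ.filter (fun x => π x ∈ Fintype.piFinset Vs ∧ x ∈ Fintype.piFinset Us)
      = (Fintype.piFinset Us).filter (fun x => π x ∈ Fintype.piFinset Vs) := by
    ext x; simp [and_comm]
  simp only [sum_pushforward, uniformOn, Fintype.prod_ite_zero, ← Fintype.mem_piFinset]
  rw [← Finset.sum_filter, Finset.filter_filter, hset]
  simp only [hU _, Finset.prod_const, Finset.card_univ, Fintype.card_fin, Finset.sum_const,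
    nsmul_eq_mul, boxCount, inv_pow, div_eq_mul_inv]

theorem IsMSSC.boxCount_div_le {n w q : ℕ} {π : Space n w → Space n w} {α ε₁ ε₂ : ℝ}
    (hmssc : IsMSSC n w π α ε₁ ε₂) (hq : (2 : ℝ) ^ (α * n) = q)
    {Us Vs : Fin w → Finset (Str n)} (hU : IsBox n w q Us) (hV : IsBox n w q Vs) :
    boxCount π Us Vs / (q : ℝ) ^ w ≤ q * (2 : ℝ) ^ (-((1 + ε₁) * α * n)) + ε₂ := by
  have hq0 : (0 : ℝ) < q := hq ▸ by positivity
  have hUne : ∀ i, (Us i).Nonempty := fun i =>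
    Finset.card_pos.mp (by rw [hU i]; exact_mod_cast hq0)
  obtain ⟨γ, γR, C, R, hγ, hγR, hsum, hγRε, hC, hR, hpush, hmarg⟩ :=
    hmssc (fun i => uniformOn (Us i)) (fun i => isDist_uniformOn (hUne i)) fun i x => by
      rw [Real.rpow_neg zero_le_two, hq, ← hU i]
      exact uniformOn_le _ _
  rw [← sum_pushforward_prod_uniformOn π hU Vs]
  refine (sum_le_of_eq_convex_combination _ (by positivity) hγ hγR hsum hR hpush
    fun i hi => ?_).trans (add_le_add_right hγRε _)
  calc ∑ y ∈ Fintype.piFinset Vs, C i y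
      ≤ ∑ v ∈ Vs i, ∑ y, if y i = v then C i y else 0 :=
        sum_piFinset_le_sum_marginal (hC i).1 Vs i
    _ ≤ ∑ _v ∈ Vs i, (2 : ℝ) ^ (-((1 + ε₁) * α * n)) :=
        Finset.sum_le_sum fun v _ => hmarg i hi v
    _ = q * (2 : ℝ) ^ (-((1 + ε₁) * α * n)) := by rw [Finset.sum_const, hV i, nsmul_eq_mul]

theorem natCast_mul_two_rpow_neg {q : ℕ} {a ε : ℝ} (hq : (2 : ℝ) ^ a = q) :
    (q : ℝ) * (2 : ℝ) ^ (-((1 + ε) * a)) = (q : ℝ) ^ (-ε) := by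
  rw [← hq, ← Real.rpow_mul zero_le_two, ← Real.rpow_add two_pos]
  ring_nf

theorem stmt0_general (n w : ℕ) (π : Equiv.Perm (Space n w)) (α ε₁ ε₂ : ℝ)
    (q : ℕ) (hq : (2 : ℝ) ^ (α * n) = q)
    (hmssc : IsMSSC n w (⇑π) α ε₁ ε₂) :
    ∀ Us Vs : Fin w → Finset (Str n), IsBox n w q Us → IsBox n w q Vs →
      (boxCount (⇑π) Us Vs : ℝ) ≤ (q : ℝ) ^ ((w : ℝ) - ε₁) + ε₂ * (q : ℝ) ^ w := by
  intro Us Vs hU hV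
  have hq0 : (0 : ℝ) < q := hq ▸ by positivity
  have hmass := hmssc.boxCount_div_le hq hU hV
  rw [mul_assoc, natCast_mul_two_rpow_neg hq, div_le_iff₀ (by positivity)] at hmass
  calc (boxCount (⇑π) Us Vs : ℝ) ≤ ((q : ℝ) ^ (-ε₁) + ε₂) * (q : ℝ) ^ w := hmass
    _ = (q : ℝ) ^ ((w : ℝ) - ε₁) + ε₂ * (q : ℝ) ^ w := by
      rw [sub_eq_neg_add, Real.rpow_add hq0, Real.rpow_natCast]
      ring

/-- If `π` is an `(α, ε₁, ε₂)`-Multi-Source-Somewhere-Condenser and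
`q = 2^{αn}`, then for all discrete `q`-boxes `U, V` of dimension `w` one has
`|{x ∈ U : π(x) ∈ V}| ≤ q^{w−ε₁} + ε₂·q^w`, i.e. `condd_α(π) ≤ log_q (q^{w−ε₁} + ε₂ q^w)`. -/
theorem stmt0 (n w : ℕ) (π : Equiv.Perm (Space n w)) (α ε₁ ε₂ : ℝ)
    (hα0 : 0 < α) (hα1 : α < 1) (hε₁ : 0 < ε₁) (hε₂ : 0 < ε₂)
    (q : ℕ) (hq : (2 : ℝ) ^ (α * n) = q)
    (hmssc : IsMSSC n w (⇑π) α ε₁ ε₂) :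
    ∀ Us Vs : Fin w → Finset (Str n), IsBox n w q Us → IsBox n w q Vs →
      (boxCount (⇑π) Us Vs : ℝ) ≤ (q : ℝ) ^ ((w : ℝ) - ε₁) + ε₂ * (q : ℝ) ^ w :=
  stmt0_general n w π α ε₁ ε₂ q hq hmssc

end Stmt0
end

section
/- There exist constants K, K' > 0 such that: for every ε ∈ (0, 0.8] there exists c ≥ ε/K such that for every prime n > K'/ε² and every α with ε ≤ α ≤ 0.8 and 2^{αn} ∈ ℕ, there exists a permutation π of ({0,1}ⁿ)³ such that for all discrete (2^{αn})-boxes U, V of dimension 3, |{x ∈ U : π(x) ∈ V}| ≤ (2^{αn})^{3−c}; that is, condd_α(π) ≤ 3 − c. -/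
/-! A uniformly random permutation of `Ω = ({0,1}ⁿ)³` works; write `N = |Ω| = 2^{3n}`. For fixed
sets `U, V` of size `m`, at most `C(m,t) · m^t · (N-t)!` permutations send `t` points of `U` into
`V`; by `C(m,t) ≤ m^t / t!` and `t! ≥ (t/3)^t` this is a fraction at most `(3m² / (t(N-t)))^t` of
all `N!` permutations. A union bound over the at most `2^{3nq}` choices each of `U` and `V` leaves a
good permutation once `2^{6nq} ≤ 2^t` and `6m² < (N-t)t`. With `m = q³` and `t = ⌊q^{3-c}⌋ + 1`
both hold for `c = ε/8`, because `q = 2^{αn} ≥ 2^{εn} ≥ 6n` and, as `α ≤ 4/5`, `q^{15/4} ≤ 2^{3n}`.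
-/

open Finset

namespace Stmt3

/-- Bit strings of length `n`, i.e. `{0,1}ⁿ`. -/
abbrev Str (n : ℕ) := Fin n → Bool

/-- The space `({0,1}ⁿ)ʷ`. -/
abbrev Space (n w : ℕ) := Fin w → Str n

/-- A family `Us` of subsets of `{0,1}ⁿ` describes a discrete `q`-box of dimension `w`
(the box itself being the product set `Fintype.piFinset Us`). -/
def IsBox (n w q : ℕ) (Us : Fin w → Finset (Str n)) : Prop :=
  ∀ i, (Us i).card = q

/-- `|{x ∈ U : π(x) ∈ V}|` for the boxes `U = U₁ × ⋯ × U_w` and `V = V₁ × ⋯ × V_w`. -/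
def boxCount {n w : ℕ} (π : Space n w → Space n w)
    (Us Vs : Fin w → Finset (Str n)) : ℕ :=
  ((Fintype.piFinset Us).filter (fun x => π x ∈ Fintype.piFinset Vs)).card

end Stmt3

open Equiv Nat

theorem pow_self_le_three_pow_mul_factorial (t : ℕ) : t ^ t ≤ 3 ^ t * t ! := by
  have hexp : (t : ℝ) ^ t ≤ Real.exp t * t ! :=
    (div_le_iff₀ (mod_cast t.factorial_pos)).1 (Real.pow_div_factorial_le_exp _ t.cast_nonneg t)
  have hexp3 : Real.exp t ≤ 3 ^ t := by
    rw [← Real.exp_one_pow]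
    exact pow_le_pow_left₀ (Real.exp_pos 1).le (by linarith [Real.exp_one_lt_d9]) t
  exact_mod_cast (hexp.trans (by gcongr) : (t : ℝ) ^ t ≤ 3 ^ t * t !)

theorem two_pow_mul_choose_mul_pow_lt_descFactorial {m N t : ℕ} (ht : t ≠ 0)
    (h : 6 * m ^ 2 < (N - t) * t) : 2 ^ t * (m.choose t * m ^ t) < N.descFactorial t := by
  have hchoose : m.choose t * t ! ≤ m ^ t := by
    rw [mul_comm, ← descFactorial_eq_factorial_mul_choose]
    exact descFactorial_le_pow m t
  have hdesc : (N - t) ^ t ≤ N.descFactorial t :=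
    (Nat.pow_le_pow_left (by omega) t).trans (pow_sub_le_descFactorial N t)
  refine Nat.lt_of_mul_lt_mul_right (a := t ^ t) ?_
  calc 2 ^ t * (m.choose t * m ^ t) * t ^ t
      ≤ 2 ^ t * (m.choose t * m ^ t) * (3 ^ t * t !) := by
        gcongr; exact pow_self_le_three_pow_mul_factorial t
    _ = 6 ^ t * (m.choose t * t !) * m ^ t := by
        rw [show 6 = 2 * 3 from rfl, mul_pow]; ring
    _ ≤ 6 ^ t * m ^ t * m ^ t := by gcongr
    _ = (6 * m ^ 2) ^ t := by ring
    _ < ((N - t) * t) ^ t := Nat.pow_lt_pow_left h ht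
    _ = (N - t) ^ t * t ^ t := mul_pow _ _ _
    _ ≤ N.descFactorial t * t ^ t := by gcongr

theorem six_mul_le_two_rpow {ε x : ℝ} (hε : 0 < ε) (h : 10000 < ε ^ 2 * x) :
    6 * x ≤ 2 ^ (ε * x) := by
  have hx : 0 < x := pos_of_mul_pos_right (h.trans' (by norm_num)) (sq_nonneg ε)
  have hlog := Real.log_two_gt_d9
  have hexp : (Real.log 2 * (ε * x)) ^ 2 / 2 ≤ 2 ^ (ε * x) := by
    rw [Real.rpow_def_of_pos two_pos]
    exact Real.pow_div_factorial_le_exp _ (by positivity) 2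
  have hlog2 : 0.48 < Real.log 2 ^ 2 := by nlinarith
  have hsq : 10000 * x < (ε * x) ^ 2 := by
    rw [mul_pow]; nlinarith [mul_lt_mul_of_pos_right h hx]
  calc 6 * x ≤ 0.48 * (ε * x) ^ 2 / 2 := by linarith
    _ ≤ Real.log 2 ^ 2 * (ε * x) ^ 2 / 2 := by gcongr
    _ = (Real.log 2 * (ε * x)) ^ 2 / 2 := by ring
    _ ≤ 2 ^ (ε * x) := hexp

theorem six_mul_rpow_add_rpow_add_one_le {Q c : ℝ} (hQ : 64 ≤ Q) (hc₀ : 0 ≤ c)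
    (hc : c ≤ 1 / 10) : 6 * Q ^ (3 + c) + Q ^ (3 - c) + 1 ≤ Q ^ (15 / 4 : ℝ) := by
  have hQ1 : 1 ≤ Q := by linarith
  have hplus : Q ^ (3 + c) ≤ Q ^ (31 / 10 : ℝ) :=
    Real.rpow_le_rpow_of_exponent_le hQ1 (by linarith)
  have hminus : Q ^ (3 - c) ≤ Q ^ (31 / 10 : ℝ) :=
    Real.rpow_le_rpow_of_exponent_le hQ1 (by linarith)
  have hone : 1 ≤ Q ^ (31 / 10 : ℝ) := Real.one_le_rpow hQ1 (by norm_num)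
  have hsqrt : 8 ≤ Q ^ (1 / 2 : ℝ) := by
    rw [← Real.sqrt_eq_rpow, Real.le_sqrt (by norm_num) (by linarith)]
    linarith
  calc 6 * Q ^ (3 + c) + Q ^ (3 - c) + 1 ≤ 8 * Q ^ (31 / 10 : ℝ) := by linarith
    _ ≤ Q ^ (1 / 2 : ℝ) * Q ^ (31 / 10 : ℝ) := by gcongr
    _ = Q ^ (18 / 5 : ℝ) := by rw [← Real.rpow_add (by linarith)]; norm_num
    _ ≤ Q ^ (15 / 4 : ℝ) := Real.rpow_le_rpow_of_exponent_le hQ1 (by norm_num)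

section Perm

variable {Ω : Type*} [Fintype Ω] [DecidableEq Ω]

theorem card_perm_fixing_eq (S : Finset Ω) :
    #{τ : Perm Ω | ∀ x ∈ S, τ x = x} = (Fintype.card Ω - #S)! := by
  have e := Perm.subtypeEquivSubtypePerm (· ∉ S)
  simp only [not_not] at e
  rw [← Fintype.card_subtype, ← Fintype.card_congr e, Fintype.card_perm,
    Fintype.card_subtype_compl, Fintype.card_coe]

theorem card_perm_mapsTo_le (S V : Finset Ω) :
    #{π : Perm Ω | ∀ x ∈ S, π x ∈ V} ≤ (Fintype.card Ω - #S)! * #V ^ #S := by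
  set A : Finset (Perm Ω) := {π | ∀ x ∈ S, π x ∈ V}
  have hmaps : ∀ π ∈ A, (fun x : S => π x) ∈ Fintype.piFinset fun _ => V := by
    intro π hπ
    simpa [A, Fintype.mem_piFinset] using hπ
  have hfiber : ∀ g, #{π ∈ A | (fun x : S => π x) = g} ≤ (Fintype.card Ω - #S)! := by
    intro g
    obtain hempty | ⟨π₀, hπ₀⟩ := eq_empty_or_nonempty {π ∈ A | (fun x : S => π x) = g}
    · simp [hempty]
    rw [← card_perm_fixing_eq]
    refine card_le_card_of_injOn (π₀⁻¹ * ·) (fun π hπ => ?_) (mul_right_injective _).injOn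
    simp only [coe_filter, mem_filter, mem_univ, true_and] at hπ hπ₀ ⊢
    intro x hx
    rw [Perm.mul_apply, Perm.inv_eq_iff_eq, congrFun hπ.2 ⟨x, hx⟩, congrFun hπ₀.2 ⟨x, hx⟩]
  calc #A ≤ (Fintype.card Ω - #S)! * #(Fintype.piFinset fun _ : S => V) :=
        card_le_mul_card_image_of_maps_to hmaps _ fun g _ => hfiber g
    _ = (Fintype.card Ω - #S)! * #V ^ #S := by
        rw [Fintype.card_piFinset, prod_const, Finset.card_univ, Fintype.card_coe]

theorem card_perm_le_card_filter_mem_le (U V : Finset Ω) (t : ℕ) :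
    #{π : Perm Ω | t ≤ #{x ∈ U | π x ∈ V}} ≤ (#U).choose t * ((Fintype.card Ω - t)! * #V ^ t) := by
  have hsub : ({π : Perm Ω | t ≤ #{x ∈ U | π x ∈ V}} : Finset _) ⊆
      (U.powersetCard t).biUnion fun S => {π : Perm Ω | ∀ x ∈ S, π x ∈ V} := by
    intro π hπ
    obtain ⟨S, hS, hcard⟩ := exists_subset_card_eq (mem_filter.1 hπ).2
    simp only [mem_biUnion, mem_powersetCard, mem_filter, mem_univ, true_and]
    exact ⟨S, ⟨hS.trans (filter_subset _ _), hcard⟩, fun x hx => (mem_filter.1 (hS hx)).2⟩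
  calc _ ≤ _ := card_le_card hsub
    _ ≤ ∑ S ∈ U.powersetCard t, #{π : Perm Ω | ∀ x ∈ S, π x ∈ V} := card_biUnion_le
    _ ≤ ∑ _S ∈ U.powersetCard t, (Fintype.card Ω - t)! * #V ^ t :=
        sum_le_sum fun S hS => (mem_powersetCard.1 hS).2 ▸ card_perm_mapsTo_le S V
    _ = _ := by rw [sum_const, card_powersetCard, smul_eq_mul]

theorem exists_perm_forall_card_filter_lt {ι : Type*} (s : Finset ι) (U : ι → Finset Ω)
    {m t : ℕ} (hU : ∀ i ∈ s, #(U i) = m) (hs : #s ^ 2 ≤ 2 ^ t) (ht : t ≠ 0)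
    (h : 6 * m ^ 2 < (Fintype.card Ω - t) * t) :
    ∃ π : Perm Ω, ∀ i ∈ s, ∀ j ∈ s, #{x ∈ U i | π x ∈ U j} < t := by
  set N := Fintype.card Ω
  have htN : t ≤ N := by
    by_contra! h'
    simp [Nat.sub_eq_zero_of_le h'.le] at h
  set bad := (s ×ˢ s).biUnion fun ij => {π : Perm Ω | t ≤ #{x ∈ U ij.1 | π x ∈ U ij.2}}
  have hbad : #bad < #(univ : Finset (Perm Ω)) :=
    calc #bad ≤ ∑ ij ∈ s ×ˢ s, #{π : Perm Ω | t ≤ #{x ∈ U ij.1 | π x ∈ U ij.2}} :=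
          card_biUnion_le
      _ ≤ ∑ _ij ∈ s ×ˢ s, m.choose t * ((N - t)! * m ^ t) := by
          refine sum_le_sum fun ij hij => ?_
          obtain ⟨hi, hj⟩ := mem_product.1 hij
          simpa only [hU _ hi, hU _ hj] using card_perm_le_card_filter_mem_le (U ij.1) (U ij.2) t
      _ = (N - t)! * (#s ^ 2 * (m.choose t * m ^ t)) := by
          rw [sum_const, card_product, smul_eq_mul]; ring
      _ ≤ (N - t)! * (2 ^ t * (m.choose t * m ^ t)) := by gcongr
      _ < (N - t)! * N.descFactorial t := by
          gcongr
          exact two_pow_mul_choose_mul_pow_lt_descFactorial ht h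
      _ = #(univ : Finset (Perm Ω)) := by
          rw [factorial_mul_descFactorial htN, Finset.card_univ, Fintype.card_perm]
  obtain ⟨π, -, hπ⟩ := exists_mem_notMem_of_card_lt_card hbad
  refine ⟨π, fun i hi j hj => lt_of_not_ge fun hle => hπ ?_⟩
  exact mem_biUnion.2 ⟨(i, j), mem_product.2 ⟨hi, hj⟩, mem_filter.2 ⟨mem_univ _, hle⟩⟩

end Perm

namespace Stmt3

theorem six_mul_cube_sq_lt_sub_floor_mul {q N : ℕ} {c : ℝ} (hq : 64 ≤ q) (hc₀ : 0 ≤ c)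
    (hc : c ≤ 1 / 10) (hN : (q : ℝ) ^ (15 / 4 : ℝ) ≤ N) :
    6 * (q ^ 3) ^ 2 < (N - (⌊(q : ℝ) ^ (3 - c)⌋₊ + 1)) * (⌊(q : ℝ) ^ (3 - c)⌋₊ + 1) := by
  set x := (q : ℝ) ^ (3 - c)
  set t := ⌊x⌋₊ + 1
  have hq0 : (0 : ℝ) < q := by positivity
  have hx : 0 ≤ x := by positivity
  have hxt : x < t := by simpa [t] using Nat.lt_floor_add_one x
  have htx : (t : ℝ) ≤ x + 1 := by simpa [t] using Nat.floor_le hx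
  have hbound := six_mul_rpow_add_rpow_add_one_le (Q := q) (by exact_mod_cast hq) hc₀ hc
  have hpos : 0 < (q : ℝ) ^ (3 + c) := by positivity
  have htN : t ≤ N := by exact_mod_cast (by linarith : (t : ℝ) ≤ N)
  have hgap : 6 * (q : ℝ) ^ (3 + c) ≤ ((N - t : ℕ) : ℝ) := by rw [Nat.cast_sub htN]; linarith
  have hsplit : ((q : ℝ) ^ 3) ^ 2 = (q : ℝ) ^ (3 + c) * x := by
    rw [← Real.rpow_add hq0, ← pow_mul, ← Real.rpow_natCast]; norm_num
  suffices (6 : ℝ) * ((q : ℝ) ^ 3) ^ 2 < ((N - t : ℕ) : ℝ) * t by exact_mod_cast this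
  calc (6 : ℝ) * ((q : ℝ) ^ 3) ^ 2 = 6 * (q : ℝ) ^ (3 + c) * x := by rw [hsplit]; ring
    _ ≤ ((N - t : ℕ) : ℝ) * x := by gcongr
    _ < ((N - t : ℕ) : ℝ) * t := by gcongr; linarith

theorem card_space (n w : ℕ) : Fintype.card (Space n w) = 2 ^ (n * w) := by
  simp [pow_mul]

theorem card_piFinset_of_isBox {n w q : ℕ} {Us : Fin w → Finset (Str n)} (h : IsBox n w q Us) :
    #(Fintype.piFinset Us) = q ^ w := by
  simp [Fintype.card_piFinset, h _]

def boxFamilies (n w q : ℕ) : Finset (Fin w → Finset (Str n)) :=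
  Fintype.piFinset fun _ => univ.powersetCard q

theorem mem_boxFamilies {n w q : ℕ} {Us : Fin w → Finset (Str n)} :
    Us ∈ boxFamilies n w q ↔ IsBox n w q Us := by
  simp [boxFamilies, IsBox, Fintype.mem_piFinset, mem_powersetCard]

theorem card_boxFamilies_le (n w q : ℕ) : #(boxFamilies n w q) ≤ 2 ^ (n * q * w) :=
  calc #(boxFamilies n w q) = ((2 ^ n).choose q) ^ w := by
        simp [boxFamilies, Fintype.card_piFinset, card_powersetCard]
    _ ≤ ((2 ^ n) ^ q) ^ w := by gcongr; exact choose_le_pow _ _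
    _ = 2 ^ (n * q * w) := by rw [← pow_mul, ← pow_mul, mul_assoc]

theorem exists_perm_boxCount_le {n q : ℕ} {c : ℝ} (hc₀ : 0 ≤ c) (hc : c ≤ 1 / 10)
    (hnq : 6 * n ≤ q) (hq : 64 ≤ q) (hN : (q : ℝ) ^ (15 / 4 : ℝ) ≤ 2 ^ (n * 3)) :
    ∃ π : Perm (Space n 3), ∀ Us Vs, IsBox n 3 q Us → IsBox n 3 q Vs →
      (boxCount π Us Vs : ℝ) ≤ (q : ℝ) ^ (3 - c) := by
  set x := (q : ℝ) ^ (3 - c)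
  have hx : 0 ≤ x := by positivity
  have hnqx : 6 * n * q ≤ ⌊x⌋₊ := by
    rw [Nat.le_floor_iff hx]
    calc ((6 * n * q : ℕ) : ℝ) ≤ (q : ℝ) ^ (2 : ℝ) := by
          rw [Real.rpow_two, sq]; exact_mod_cast Nat.mul_le_mul_right q hnq
      _ ≤ x := Real.rpow_le_rpow_of_exponent_le (by exact_mod_cast (by omega : 1 ≤ q)) (by linarith)
  have hboxes : #(boxFamilies n 3 q) ^ 2 ≤ 2 ^ (⌊x⌋₊ + 1) :=
    calc _ ≤ (2 ^ (n * q * 3)) ^ 2 := by gcongr; exact card_boxFamilies_le n 3 q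
      _ = 2 ^ (6 * n * q) := by rw [← pow_mul]; ring_nf
      _ ≤ 2 ^ (⌊x⌋₊ + 1) := pow_le_pow_right₀ one_le_two (by omega)
  obtain ⟨π, hπ⟩ := exists_perm_forall_card_filter_lt _ Fintype.piFinset
    (fun _ hUs => card_piFinset_of_isBox (mem_boxFamilies.1 hUs)) hboxes (succ_ne_zero _)
    (by rw [card_space]; exact six_mul_cube_sq_lt_sub_floor_mul hq hc₀ hc (by exact_mod_cast hN))
  refine ⟨π, fun Us Vs hUs hVs => ?_⟩
  have hlt := hπ Us (mem_boxFamilies.2 hUs) Vs (mem_boxFamilies.2 hVs)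
  exact (Nat.le_floor_iff hx).1 (Nat.lt_succ_iff.1 hlt)

/-- There are constants `K, K' > 0` such that for every `ε ∈ (0, 0.8]`
there exists `c ≥ ε/K` such that for every prime `n > K'/ε²` and every `α` with
`ε ≤ α ≤ 0.8` and `2^{αn} ∈ ℕ`, there exists a permutation `π` of `({0,1}ⁿ)³` with
`|{x ∈ U : π(x) ∈ V}| ≤ (2^{αn})^{3−c}` for all discrete `2^{αn}`-boxes `U, V` of
dimension `3`, i.e. `condd_α(π) ≤ 3 − c`. -/
theorem stmt3 :
    ∃ K K' : ℝ, 0 < K ∧ 0 < K' ∧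
      ∀ ε : ℝ, 0 < ε → ε ≤ 0.8 →
        ∃ c : ℝ, ε / K ≤ c ∧
          ∀ n : ℕ, n.Prime → K' / ε ^ 2 < (n : ℝ) →
            ∀ α : ℝ, ε ≤ α → α ≤ 0.8 →
              ∀ q : ℕ, (2 : ℝ) ^ (α * n) = q →
                ∃ π : Equiv.Perm (Space n 3),
                  ∀ Us Vs : Fin 3 → Finset (Str n), IsBox n 3 q Us → IsBox n 3 q Vs →
                    (boxCount (⇑π) Us Vs : ℝ) ≤ (q : ℝ) ^ ((3 : ℝ) - c) := by
  refine ⟨8, 10000, by norm_num, by norm_num, fun ε hε hε8 => ⟨ε / 8, le_rfl, ?_⟩⟩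
  intro n _ hn α hεα hα8 q hq
  norm_num at hε8 hα8
  have hεn : 10000 < ε ^ 2 * n := (div_lt_iff₀' (by positivity)).1 hn
  have hn_large : 15625 < (n : ℝ) := by nlinarith
  have hnq : 6 * (n : ℝ) ≤ q := hq ▸ (six_mul_le_two_rpow hε hεn).trans
    (Real.rpow_le_rpow_of_exponent_le one_le_two (by gcongr))
  have hN : (q : ℝ) ^ (15 / 4 : ℝ) ≤ 2 ^ (n * 3) := by
    rw [← hq, ← Real.rpow_mul two_pos.le, ← Real.rpow_natCast]
    push_cast
    exact Real.rpow_le_rpow_of_exponent_le one_le_two (by nlinarith)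
  exact exists_perm_boxCount_le (by positivity) (by linarith) (by exact_mod_cast hnq)
    (by exact_mod_cast (by linarith : (64 : ℝ) ≤ q)) hN

end Stmt3
end

section
/- Let π be a permutation of ({0,1}ⁿ)³, let q = 2^{αn} ∈ ℕ, and suppose that for all discrete q-boxes A, B of dimension 3 one has |{x ∈ A : π(x) ∈ B}| ≤ q^{3−c}. For w ≥ 3 define the permutation π^{(w)} of ({0,1}ⁿ)ʷ that applies π to each of the consecutive blocks of coordinates (x₁,x₂,x₃), (x₄,x₅,x₆), …, (x_{3⌊w/3⌋−2}, x_{3⌊w/3⌋−1}, x_{3⌊w/3⌋}) and leaves the remaining w − 3⌊w/3⌋ coordinates unchanged. Then π^{(w)} is a permutation and for all discrete q-boxes U, V of dimension w, |{x ∈ U : π^{(w)}(x) ∈ V}| ≤ q^{w − ⌊w/3⌋·c}. -/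
/-!
Regroup the coordinates of `({0,1}ⁿ)ʷ` into `⌊w/3⌋` blocks of three and `w mod 3` leftover
coordinates. In these coordinates `π^{(w)}` is `π` on every block and the identity on the
leftovers, and a product box splits accordingly, so the count factorises into `⌊w/3⌋`
three-dimensional counts, each at most `q^{3-c}`, times at most `q` per leftover coordinate:
`q^{(3-c)⌊w/3⌋ + (w mod 3)} = q^{w - ⌊w/3⌋c}`.
-/

open Finset

namespace Stmt5

/-- Bit strings of length `n`, i.e. `{0,1}ⁿ`. -/
abbrev Str (n : ℕ) := Fin n → Bool

/-- The space `({0,1}ⁿ)ʷ`. -/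
abbrev Space (n w : ℕ) := Fin w → Str n

/-- A family `Us` of subsets of `{0,1}ⁿ` describes a discrete `q`-box of dimension `w`
(the box itself being the product set `Fintype.piFinset Us`). -/
def IsBox (n w q : ℕ) (Us : Fin w → Finset (Str n)) : Prop :=
  ∀ i, (Us i).card = q

/-- `|{x ∈ U : π(x) ∈ V}|` for the boxes `U = U₁ × ⋯ × U_w` and `V = V₁ × ⋯ × V_w`. -/
def boxCount {n w : ℕ} (π : Space n w → Space n w)
    (Us Vs : Fin w → Finset (Str n)) : ℕ :=
  ((Fintype.piFinset Us).filter (fun x => π x ∈ Fintype.piFinset Vs)).card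

/-- The permutation `π^{(w)}` of `({0,1}ⁿ)ʷ` obtained by applying `π` to each of the
consecutive blocks of three coordinates `(x₁,x₂,x₃), (x₄,x₅,x₆), …,
(x_{3⌊w/3⌋−2}, x_{3⌊w/3⌋−1}, x_{3⌊w/3⌋})` and leaving the remaining `w − 3⌊w/3⌋`
coordinates unchanged. -/
def piW (n w : ℕ) (π : (Fin 3 → Str n) → (Fin 3 → Str n)) :
    Space n w → Space n w :=
  fun x j =>
    if h : (j : ℕ) < 3 * (w / 3) then
      π (fun k : Fin 3 => x ⟨3 * ((j : ℕ) / 3) + (k : ℕ), by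
          have hk := k.isLt; omega⟩)
        ⟨(j : ℕ) % 3, by omega⟩
    else x j

theorem card_filter_piFinset_piMap {ι : Type*} [Fintype ι] [DecidableEq ι] {α β : ι → Type*}
    [∀ i, DecidableEq (β i)] (f : ∀ i, α i → β i) (s : ∀ i, Finset (α i))
    (t : ∀ i, Finset (β i)) :
    #{x ∈ Fintype.piFinset s | (fun i => f i (x i)) ∈ Fintype.piFinset t} =
      ∏ i, #{a ∈ s i | f i a ∈ t i} := by
  rw [← Fintype.card_piFinset]
  congr 1
  ext x
  simp [forall_and]

def blockIndex (w : ℕ) : Fin (w / 3) × Fin 3 ⊕ Fin (w % 3) ≃ Fin w :=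
  (finProdFinEquiv.sumCongr (Equiv.refl _)).trans
    (finSumFinEquiv.trans (finCongr (Nat.div_add_mod' w 3)))

@[simp]
theorem val_blockIndex_inl {w : ℕ} (b : Fin (w / 3)) (k : Fin 3) :
    (blockIndex w (.inl (b, k)) : ℕ) = k + 3 * b := rfl

@[simp]
theorem val_blockIndex_inr {w : ℕ} (i : Fin (w % 3)) :
    (blockIndex w (.inr i) : ℕ) = w / 3 * 3 + i := rfl

theorem piW_blockIndex_inl {n w : ℕ} (π : (Fin 3 → Str n) → (Fin 3 → Str n)) (x : Space n w)
    (b : Fin (w / 3)) (k : Fin 3) :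
    piW n w π x (blockIndex w (.inl (b, k))) =
      π (fun k' => x (blockIndex w (.inl (b, k')))) k := by
  have hb := b.isLt
  have hk := k.isLt
  rw [piW, dif_pos (by simp only [val_blockIndex_inl]; omega)]
  congr 1
  · ext k' : 1
    congr 1
    ext
    simp only [val_blockIndex_inl]
    omega
  · ext
    simp only [val_blockIndex_inl]
    omega

theorem piW_blockIndex_inr {n w : ℕ} (π : (Fin 3 → Str n) → (Fin 3 → Str n)) (x : Space n w)
    (i : Fin (w % 3)) : piW n w π x (blockIndex w (.inr i)) = x (blockIndex w (.inr i)) := by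
  rw [piW, dif_neg (by simp only [val_blockIndex_inr]; omega)]

def blockEquiv (n w : ℕ) :
    Space n w ≃ (Fin (w / 3) → Fin 3 → Str n) × (Fin (w % 3) → Str n) :=
  ((blockIndex w).arrowCongr (Equiv.refl _)).symm.trans
    ((Equiv.sumArrowEquivProdArrow _ _ _).trans ((Equiv.curry _ _ _).prodCongr (Equiv.refl _)))

@[simp]
theorem blockEquiv_apply {n w : ℕ} (x : Space n w) :
    blockEquiv n w x =
      (fun b k => x (blockIndex w (.inl (b, k))), fun i => x (blockIndex w (.inr i))) := rfl

theorem blockEquiv_piW {n w : ℕ} (π : (Fin 3 → Str n) → (Fin 3 → Str n)) (x : Space n w) :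
    blockEquiv n w (piW n w π x) = Prod.map (fun y b => π (y b)) id (blockEquiv n w x) := by
  simp [piW_blockIndex_inl, piW_blockIndex_inr]

def blockFamily {n w : ℕ} (Us : Fin w → Finset (Str n)) (b : Fin (w / 3)) :
    Fin 3 → Finset (Str n) :=
  fun k => Us (blockIndex w (.inl (b, k)))

def tailFamily {n w : ℕ} (Us : Fin w → Finset (Str n)) : Fin (w % 3) → Finset (Str n) :=
  fun i => Us (blockIndex w (.inr i))

theorem mem_piFinset_iff_blockEquiv {n w : ℕ} (Us : Fin w → Finset (Str n)) (x : Space n w) :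
    x ∈ Fintype.piFinset Us ↔
      (blockEquiv n w x).1 ∈ Fintype.piFinset (fun b => Fintype.piFinset (blockFamily Us b)) ∧
        (blockEquiv n w x).2 ∈ Fintype.piFinset (tailFamily Us) := by
  simp [blockFamily, tailFamily, ← (blockIndex w).forall_congr_right, Sum.forall, Prod.forall]

theorem boxCount_piW {n w : ℕ} (π : (Fin 3 → Str n) → (Fin 3 → Str n))
    (Us Vs : Fin w → Finset (Str n)) :
    boxCount (piW n w π) Us Vs =
      (∏ b, boxCount π (blockFamily Us b) (blockFamily Vs b)) *
        ∏ i, #(tailFamily Us i ∩ tailFamily Vs i) := by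
  calc boxCount (piW n w π) Us Vs
      = #({y ∈ Fintype.piFinset (fun b => Fintype.piFinset (blockFamily Us b)) |
            (fun b => π (y b)) ∈ Fintype.piFinset (fun b => Fintype.piFinset (blockFamily Vs b))}
          ×ˢ Fintype.piFinset (fun i => tailFamily Us i ∩ tailFamily Vs i)) :=
        card_equiv (blockEquiv n w) fun x => by
          rw [mem_filter, mem_piFinset_iff_blockEquiv, mem_piFinset_iff_blockEquiv Vs,
            blockEquiv_piW]
          simp only [mem_product, mem_filter, Prod.map_fst, Prod.map_snd, id,
            Fintype.mem_piFinset, mem_inter, forall_and]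
          tauto
    _ = _ := by
        rw [card_product, card_filter_piFinset_piMap (fun _ => π), Fintype.card_piFinset]
        rfl

theorem bijective_piW {n w : ℕ} {π : (Fin 3 → Str n) → (Fin 3 → Str n)}
    (hπ : Function.Bijective π) : Function.Bijective (piW n w π) := by
  have h : piW n w π =
      (blockEquiv n w).symm ∘ Prod.map (fun y b => π (y b)) id ∘ blockEquiv n w :=
    funext fun x => by simp only [Function.comp_apply, ← blockEquiv_piW, Equiv.symm_apply_apply]
  rw [h]
  exact (Equiv.bijective _).comp (((Function.Bijective.piMap fun _ => hπ).prodMap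
    Function.bijective_id).comp (Equiv.bijective _))

theorem boxCount_piW_le {n w q : ℕ} (hq : 0 < q) {c : ℝ} {π : (Fin 3 → Str n) → (Fin 3 → Str n)}
    (hπ : ∀ As Bs : Fin 3 → Finset (Str n), IsBox n 3 q As → IsBox n 3 q Bs →
      (boxCount π As Bs : ℝ) ≤ (q : ℝ) ^ ((3 : ℝ) - c))
    {Us Vs : Fin w → Finset (Str n)} (hU : IsBox n w q Us) (hV : IsBox n w q Vs) :
    (boxCount (piW n w π) Us Vs : ℝ) ≤ (q : ℝ) ^ ((w : ℝ) - ((w / 3 : ℕ) : ℝ) * c) := by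
  have hq' : (0 : ℝ) < q := Nat.cast_pos.mpr hq
  have hblocks : ∏ b, (boxCount π (blockFamily Us b) (blockFamily Vs b) : ℝ) ≤
      ((q : ℝ) ^ ((3 : ℝ) - c)) ^ (w / 3) := by
    simpa using prod_le_prod (s := univ)
      (f := fun b => (boxCount π (blockFamily Us b) (blockFamily Vs b) : ℝ))
      (g := fun _ => (q : ℝ) ^ ((3 : ℝ) - c))
      (fun _ _ => by positivity) fun b _ => hπ _ _ (fun _ => hU _) (fun _ => hV _)
  have htail : ∏ i, (#(tailFamily Us i ∩ tailFamily Vs i) : ℝ) ≤ (q : ℝ) ^ (w % 3) := by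
    simpa using prod_le_prod (s := univ)
      (f := fun i => (#(tailFamily Us i ∩ tailFamily Vs i) : ℝ)) (g := fun _ => (q : ℝ))
      (fun _ _ => by positivity)
      fun i _ => Nat.cast_le.mpr ((card_le_card inter_subset_left).trans_eq (hU _))
  have hw : (w : ℝ) = (w / 3 : ℕ) * 3 + (w % 3 : ℕ) := by
    exact_mod_cast (Nat.div_add_mod' w 3).symm
  rw [boxCount_piW]
  push_cast
  calc _ ≤ ((q : ℝ) ^ ((3 : ℝ) - c)) ^ (w / 3) * (q : ℝ) ^ (w % 3) :=
        mul_le_mul hblocks htail (by positivity) (by positivity)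
    _ = (q : ℝ) ^ ((w : ℝ) - ((w / 3 : ℕ) : ℝ) * c) := by
        rw [← Real.rpow_natCast, ← Real.rpow_natCast, ← Real.rpow_mul hq'.le,
          ← Real.rpow_add hq', hw]
        ring_nf

theorem stmt5_general (n w : ℕ) (π : Equiv.Perm (Fin 3 → Str n))
    (α c : ℝ)
    (q : ℕ) (hq : (2 : ℝ) ^ (α * n) = q)
    (hcond3 : ∀ As Bs : Fin 3 → Finset (Str n), IsBox n 3 q As → IsBox n 3 q Bs →
      (boxCount (⇑π) As Bs : ℝ) ≤ (q : ℝ) ^ ((3 : ℝ) - c)) :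
    Function.Bijective (piW n w (⇑π)) ∧
      ∀ Us Vs : Fin w → Finset (Str n), IsBox n w q Us → IsBox n w q Vs →
        (boxCount (piW n w (⇑π)) Us Vs : ℝ)
          ≤ (q : ℝ) ^ ((w : ℝ) - ((w / 3 : ℕ) : ℝ) * c) := by
  have hq0 : 0 < q := Nat.cast_pos.mp (hq ▸ Real.rpow_pos_of_pos two_pos _)
  exact ⟨bijective_piW π.bijective, fun _ _ => boxCount_piW_le hq0 hcond3⟩

/-- If every pair of discrete `q`-boxes `A, B` of dimension `3`
satisfies `|{x ∈ A : π(x) ∈ B}| ≤ q^{3−c}` (with `q = 2^{αn} ∈ ℕ`), then for `w ≥ 3` the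
blockwise map `π^{(w)}` is a permutation of `({0,1}ⁿ)ʷ` and every pair of discrete
`q`-boxes `U, V` of dimension `w` satisfies
`|{x ∈ U : π^{(w)}(x) ∈ V}| ≤ q^{w − ⌊w/3⌋·c}`. -/
theorem stmt5 (n w : ℕ) (hw : 3 ≤ w) (π : Equiv.Perm (Fin 3 → Str n))
    (α c : ℝ) (hα0 : 0 < α) (hα1 : α < 1)
    (q : ℕ) (hq : (2 : ℝ) ^ (α * n) = q)
    (hcond3 : ∀ As Bs : Fin 3 → Finset (Str n), IsBox n 3 q As → IsBox n 3 q Bs →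
      (boxCount (⇑π) As Bs : ℝ) ≤ (q : ℝ) ^ ((3 : ℝ) - c)) :
    Function.Bijective (piW n w (⇑π)) ∧
      ∀ Us Vs : Fin w → Finset (Str n), IsBox n w q Us → IsBox n w q Vs →
        (boxCount (piW n w (⇑π)) Us Vs : ℝ)
          ≤ (q : ℝ) ^ ((w : ℝ) - ((w / 3 : ℕ) : ℝ) * c) :=
  stmt5_general n w π α c q hq hcond3

end Stmt5
end

section
/- Let π be a permutation of ({0,1}ⁿ)³, let 0 < α < 1 with q = 2^{αn} ∈ ℕ, and let δ > 0. Suppose that for every triple of mutually independent random variables X₁, X₂, X₃ on {0,1}ⁿ, each with min-entropy at least αn, the distribution of π(X₁, X₂, X₃) can be written as a convex combination γ₃C₃ + γR with γ ≤ 2^{−δαn} and the third coordinate of C₃ having min-entropy at least (1+δ)αn. Then for all discrete q-boxes U, V of dimension 3, |{x ∈ U : π(x) ∈ V}| ≤ 2·q^{3−δ} = q^{3 − δ + 1/(αn)}; in particular condd_α(π) ≤ 3 − δ + 1/(αn). -/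
/-! Feed the condenser the uniform distribution on the box `U`: each coordinate has min-entropy
exactly `log₂ q = αn`, and `π(X)` lands in `V` with probability `|{x ∈ U : π x ∈ V}| / q³`.
The main part `C₃` gives each value of the third coordinate mass at most
`2^{-(1+δ)αn} = q^{-1-δ}`, and `V` has only `q` such values, so `C₃(V) ≤ q^{-δ}`; the rest
contributes at most `γ ≤ q^{-δ}`. Hence the count is at most `2 q^{3-δ}`, and `2 = q^{1/(αn)}`. -/

open Finset

namespace Stmt13

/-- Bit strings of length `n`, i.e. `{0,1}ⁿ`. -/
abbrev Str (n : ℕ) := Fin n → Bool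

/-- The space `({0,1}ⁿ)ʷ`. -/
abbrev Space (n w : ℕ) := Fin w → Str n

/-- A family `Us` of subsets of `{0,1}ⁿ` describes a discrete `q`-box of dimension `w`
(the box itself being the product set `Fintype.piFinset Us`). -/
def IsBox (n w q : ℕ) (Us : Fin w → Finset (Str n)) : Prop :=
  ∀ i, (Us i).card = q

/-- `|{x ∈ U : π(x) ∈ V}|` for the boxes `U = U₁ × ⋯ × U_w` and `V = V₁ × ⋯ × V_w`. -/
def boxCount {n w : ℕ} (π : Space n w → Space n w)
    (Us Vs : Fin w → Finset (Str n)) : ℕ :=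
  ((Fintype.piFinset Us).filter (fun x => π x ∈ Fintype.piFinset Vs)).card

def IsDist {α : Type*} [Fintype α] (p : α → ℝ) : Prop :=
  (∀ x, 0 ≤ p x) ∧ ∑ x, p x = 1

/-- The distribution of `π(X)` when `X` has distribution `p`. -/
def pushforward {n w : ℕ} (π : Space n w → Space n w) (p : Space n w → ℝ) :
    Space n w → ℝ :=
  fun y => ∑ x : Space n w, if π x = y then p x else 0

section Distributions

variable {α : Type*} [Fintype α]

theorem IsDist.sum_le_one {p : α → ℝ} (hp : IsDist p) (s : Finset α) : ∑ x ∈ s, p x ≤ 1 :=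
  hp.2 ▸ sum_le_sum_of_subset_of_nonneg (subset_univ s) fun x _ _ => hp.1 x

theorem sum_mixture_le {C R : α → ℝ} {γ₃ γ η A : ℝ} (s : Finset α) (hC : ∀ x, 0 ≤ C x)
    (hR : IsDist R) (hγ : 0 ≤ γ) (hγsum : γ₃ + γ = 1) (hγη : γ ≤ η)
    (hCs : ∑ x ∈ s, C x ≤ A) :
    ∑ x ∈ s, (γ₃ * C x + γ * R x) ≤ A + η := by
  rw [sum_add_distrib, ← mul_sum, ← mul_sum]
  have hC0 : 0 ≤ ∑ x ∈ s, C x := sum_nonneg fun x _ => hC x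
  have hR0 : 0 ≤ ∑ x ∈ s, R x := sum_nonneg fun x _ => hR.1 x
  have hγ₃1 : γ₃ ≤ 1 := by linarith
  gcongr
  · exact (mul_le_of_le_one_left hC0 hγ₃1).trans hCs
  · exact (mul_le_of_le_one_right hγ (hR.sum_le_one s)).trans hγη

theorem sum_le_card_mul_of_fiber_le {β : Type*} [DecidableEq β] {C : α → ℝ} {ε : ℝ}
    (f : α → β) {s : Finset α} {t : Finset β} (hst : ∀ x ∈ s, f x ∈ t)
    (hC : ∀ x, 0 ≤ C x) (hfiber : ∀ v, (∑ x, if f x = v then C x else 0) ≤ ε) :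
    ∑ x ∈ s, C x ≤ #t * ε := by
  rw [← sum_fiberwise_of_maps_to hst, ← nsmul_eq_mul, ← sum_const]
  refine sum_le_sum fun v _ => (le_trans ?_ (hfiber v))
  rw [← sum_filter]
  exact sum_le_sum_of_subset_of_nonneg (filter_subset_filter _ (subset_univ s))
    fun x _ _ => hC x

end Distributions

section Uniform

variable {α : Type*} [DecidableEq α]

noncomputable def uniformDist (s : Finset α) : α → ℝ := fun x => if x ∈ s then (#s : ℝ)⁻¹ else 0

theorem uniformDist_le (s : Finset α) (x : α) : uniformDist s x ≤ (#s : ℝ)⁻¹ := by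
  unfold uniformDist
  split_ifs
  exacts [le_rfl, by positivity]

theorem isDist_uniformDist [Fintype α] {s : Finset α} (hs : s.Nonempty) :
    IsDist (uniformDist s) := by
  refine ⟨fun x => by unfold uniformDist; positivity, ?_⟩
  simp only [uniformDist, sum_ite_mem, univ_inter, sum_const, nsmul_eq_mul]
  exact mul_inv_cancel₀ (by exact_mod_cast hs.card_ne_zero)

end Uniform

section Boxes

variable {n w q : ℕ}

theorem IsBox.card_piFinset {Us : Fin w → Finset (Str n)} (hU : IsBox n w q Us) :
    #(Fintype.piFinset Us) = q ^ w := by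
  simp [Fintype.card_piFinset, hU _]

theorem boxCount_le_pow (π : Space n w → Space n w) {Us : Fin w → Finset (Str n)}
    (Vs : Fin w → Finset (Str n)) (hU : IsBox n w q Us) : boxCount π Us Vs ≤ q ^ w :=
  hU.card_piFinset ▸ card_filter_le _ _

theorem sum_pushforward (π : Space n w → Space n w) (p : Space n w → ℝ)
    (t : Finset (Space n w)) :
    ∑ y ∈ t, pushforward π p y = ∑ x with π x ∈ t, p x := by
  simp only [pushforward]
  rw [sum_comm, sum_filter]
  exact sum_congr rfl fun x _ => sum_ite_eq t (π x) _

theorem prod_uniformDist_of_isBox {Us : Fin w → Finset (Str n)} (hU : IsBox n w q Us)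
    (x : Space n w) :
    ∏ i, uniformDist (Us i) (x i) = if x ∈ Fintype.piFinset Us then ((q : ℝ)⁻¹) ^ w else 0 := by
  split_ifs with hx
  · rw [Fintype.mem_piFinset] at hx
    simp [uniformDist, hx, hU _]
  · obtain ⟨i, hi⟩ := by simpa [Fintype.mem_piFinset] using hx
    exact prod_eq_zero (mem_univ i) (if_neg hi)

theorem sum_pushforward_uniform_eq_boxCount (π : Space n w → Space n w)
    {Us : Fin w → Finset (Str n)} (Vs : Fin w → Finset (Str n)) (hU : IsBox n w q Us) :
    ∑ y ∈ Fintype.piFinset Vs, pushforward π (fun x => ∏ i, uniformDist (Us i) (x i)) y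
      = boxCount π Us Vs * ((q : ℝ)⁻¹) ^ w := by
  simp only [sum_pushforward, prod_uniformDist_of_isBox hU, ← sum_filter, filter_filter,
    sum_const, nsmul_eq_mul, boxCount]
  congr 3
  ext x
  simp [and_comm]

theorem boxCount_mul_inv_pow_le (π : Space n w → Space n w) {Us Vs : Fin w → Finset (Str n)}
    (hU : IsBox n w q Us) (hV : IsBox n w q Vs) (i : Fin w) {γ₃ γ η ε : ℝ}
    {C R : Space n w → ℝ} (hγ : 0 ≤ γ) (hγsum : γ₃ + γ = 1) (hγη : γ ≤ η)
    (hC : IsDist C) (hR : IsDist R)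
    (hpush : ∀ y, pushforward π (fun x => ∏ j, uniformDist (Us j) (x j)) y
      = γ₃ * C y + γ * R y)
    (hfiber : ∀ v, (∑ y, if y i = v then C y else 0) ≤ ε) :
    boxCount π Us Vs * ((q : ℝ)⁻¹) ^ w ≤ q * ε + η := by
  rw [← sum_pushforward_uniform_eq_boxCount π Vs hU, sum_congr rfl fun y _ => hpush y]
  refine sum_mixture_le _ hC.1 hR hγ hγsum hγη ?_
  have := sum_le_card_mul_of_fiber_le (fun y : Space n w => y i) (s := Fintype.piFinset Vs)
    (fun y hy => Fintype.mem_piFinset.mp hy i) hC.1 hfiber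
  rwa [hV i] at this

end Boxes

theorem le_two_mul_rpow_sub_of_mul_inv_pow_le {q c δ : ℝ} {w : ℕ} (hq : 0 < q)
    (h : c * (q⁻¹) ^ w ≤ q * q ^ (-1 - δ) + q ^ (-δ)) : c ≤ 2 * q ^ ((w : ℝ) - δ) := by
  have hloss : q * q ^ (-1 - δ) = q ^ (-δ) := by
    rw [show -δ = 1 + (-1 - δ) by ring, Real.rpow_add hq, Real.rpow_one]
  calc c = c * (q⁻¹) ^ w * q ^ w := by rw [inv_pow, inv_mul_cancel_right₀ (by positivity)]
    _ ≤ 2 * q ^ (-δ) * q ^ w := by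
        gcongr ?_ * _
        linarith
    _ = 2 * q ^ ((w : ℝ) - δ) := by
        rw [sub_eq_add_neg, Real.rpow_add hq, Real.rpow_natCast]
        ring

theorem stmt13_general (n : ℕ) (π : Equiv.Perm (Space n 3)) (α δ : ℝ)
    (q : ℕ) (hq : (2 : ℝ) ^ (α * n) = q)
    (hcondenser : ∀ X : Fin 3 → (Str n → ℝ),
      (∀ i, IsDist (X i)) →
      (∀ i x, X i x ≤ (2 : ℝ) ^ (-(α * n))) →
      ∃ (γ₃ γ : ℝ) (C₃ R : Space n 3 → ℝ),
        0 ≤ γ₃ ∧ 0 ≤ γ ∧ γ₃ + γ = 1 ∧ γ ≤ (2 : ℝ) ^ (-(δ * α * n)) ∧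
        IsDist C₃ ∧ IsDist R ∧
        (∀ y, pushforward (⇑π) (fun x => ∏ i, X i (x i)) y = γ₃ * C₃ y + γ * R y) ∧
        (∀ v : Str n,
          (∑ y : Space n 3, if y 2 = v then C₃ y else 0)
            ≤ (2 : ℝ) ^ (-((1 + δ) * α * n)))) :
    ∀ Us Vs : Fin 3 → Finset (Str n), IsBox n 3 q Us → IsBox n 3 q Vs →
      (boxCount (⇑π) Us Vs : ℝ) ≤ 2 * (q : ℝ) ^ ((3 : ℝ) - δ) ∧
      (boxCount (⇑π) Us Vs : ℝ) ≤ (q : ℝ) ^ ((3 : ℝ) - δ + 1 / (α * n)) := by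
  intro Us Vs hU hV
  have hq0 : (0 : ℝ) < q := hq ▸ by positivity
  have hpow : ∀ b : ℝ, (2 : ℝ) ^ (α * n * b) = (q : ℝ) ^ b := fun b => by
    rw [Real.rpow_mul zero_le_two, hq]
  have hne : ∀ i, (Us i).Nonempty := fun i =>
    card_pos.mp (by rw [hU i]; exact_mod_cast hq0)
  have hmass : (2 : ℝ) ^ (-(α * n)) = (q : ℝ)⁻¹ := by rw [Real.rpow_neg zero_le_two, hq]
  obtain ⟨γ₃, γ, C, R, -, hγ, hγsum, hγη, hC, hR, hpush, hfiber⟩ :=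
    hcondenser (fun i => uniformDist (Us i)) (fun i => isDist_uniformDist (hne i))
      fun i x => by rw [hmass, ← hU i]; exact uniformDist_le _ x
  have hcount := boxCount_mul_inv_pow_le (⇑π) hU hV 2 hγ hγsum hγη hC hR hpush hfiber
  rw [show -((1 + δ) * α * n) = α * n * (-1 - δ) by ring, hpow,
    show -(δ * α * n) = α * n * (-δ) by ring, hpow] at hcount
  have hfirst : (boxCount (⇑π) Us Vs : ℝ) ≤ 2 * (q : ℝ) ^ ((3 : ℝ) - δ) := by
    exact_mod_cast le_two_mul_rpow_sub_of_mul_inv_pow_le hq0 hcount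
  refine ⟨hfirst, ?_⟩
  rcases eq_or_ne (α * n) 0 with h0 | h0
  · -- `1 / (α * n)` is the junk value `0`, but `q = 1`, so `U` is a single point.
    have hq1 : (q : ℝ) = 1 := by rw [← hq, h0, Real.rpow_zero]
    have := boxCount_le_pow (⇑π) Vs hU
    simp_all
  · have htwo : (q : ℝ) ^ (1 / (α * n)) = 2 := by
      rw [← hpow, mul_one_div_cancel h0, Real.rpow_one]
    rw [Real.rpow_add hq0, htwo]
    linarith

/-- Let `π` be a permutation of `({0,1}ⁿ)³` and `q = 2^{αn} ∈ ℕ`.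
Suppose that for all independent sources `X₁, X₂, X₃` on `{0,1}ⁿ` of min-entropy at least
`αn`, the distribution of `π(X₁,X₂,X₃)` is a convex combination `γ₃C₃ + γR` with
`γ ≤ 2^{−δαn}` and the third coordinate of `C₃` of min-entropy at least `(1+δ)αn`.
Then every pair of discrete `q`-boxes `U, V` of dimension `3` satisfies
`|{x ∈ U : π(x) ∈ V}| ≤ 2·q^{3−δ} = q^{3−δ+1/(αn)}`; in particular
`condd_α(π) ≤ 3 − δ + 1/(αn)`. -/
theorem stmt13 (n : ℕ) (π : Equiv.Perm (Space n 3)) (α δ : ℝ)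
    (hα0 : 0 < α) (hα1 : α < 1) (hδ : 0 < δ)
    (q : ℕ) (hq : (2 : ℝ) ^ (α * n) = q)
    (hcondenser : ∀ X : Fin 3 → (Str n → ℝ),
      (∀ i, IsDist (X i)) →
      (∀ i x, X i x ≤ (2 : ℝ) ^ (-(α * n))) →
      ∃ (γ₃ γ : ℝ) (C₃ R : Space n 3 → ℝ),
        0 ≤ γ₃ ∧ 0 ≤ γ ∧ γ₃ + γ = 1 ∧ γ ≤ (2 : ℝ) ^ (-(δ * α * n)) ∧
        IsDist C₃ ∧ IsDist R ∧
        (∀ y, pushforward (⇑π) (fun x => ∏ i, X i (x i)) y = γ₃ * C₃ y + γ * R y) ∧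
        (∀ v : Str n,
          (∑ y : Space n 3, if y 2 = v then C₃ y else 0)
            ≤ (2 : ℝ) ^ (-((1 + δ) * α * n)))) :
    ∀ Us Vs : Fin 3 → Finset (Str n), IsBox n 3 q Us → IsBox n 3 q Vs →
      (boxCount (⇑π) Us Vs : ℝ) ≤ 2 * (q : ℝ) ^ ((3 : ℝ) - δ) ∧
      (boxCount (⇑π) Us Vs : ℝ) ≤ (q : ℝ) ^ ((3 : ℝ) - δ + 1 / (α * n)) :=
  stmt13_general n π α δ q hq hcondenser

end Stmt13
end
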